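/- Let n ≥ 1, 0 ≤ α < π/2, and let A, B ∈ Mₙ(ℂ) satisfy A, B ∈ S_α. Then w(AB) ≤ sec(α)²·w(A)·w(B). -/

import Mathlib

open Matrix MeasureTheory
open scoped ComplexOrder

attribute [local instance] Matrix.normedAddCommGroup Matrix.normedSpace

/-- The numerical radius of a complex `n × n` matrix. -/
noncomputable def nradius {n : ℕ} (A : Matrix (Fin n) (Fin n) ℂ) : ℝ :=
  sSup {r : ℝ | ∃ x : EuclideanSpace ℂ (Fin n), ‖x‖ = 1 ∧
    r = ‖(inner ℂ x (Matrix.toEuclideanCLM (𝕜 := ℂ) A x) : ℂ)‖}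

/-- The operator (spectral) norm of a complex `n × n` matrix. -/
noncomputable def opNorm {n : ℕ} (A : Matrix (Fin n) (Fin n) ℂ) : ℝ :=
  ‖(Matrix.toEuclideanCLM (𝕜 := ℂ) A :
      EuclideanSpace ℂ (Fin n) →L[ℂ] EuclideanSpace ℂ (Fin n))‖

/-- The real part `(A + Aᴴ)/2` of a matrix. -/
noncomputable def matRe {n : ℕ} (A : Matrix (Fin n) (Fin n) ℂ) : Matrix (Fin n) (Fin n) ℂ :=
  (1 / 2 : ℂ) • (A + Aᴴ)

/-- `A ∈ S_α` : `Re A` is positive definite and the numerical range of `A` lies in the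
sector `{z : |Im z| ≤ tan α · Re z}`. -/
def InSector {n : ℕ} (α : ℝ) (A : Matrix (Fin n) (Fin n) ℂ) : Prop :=
  (matRe A).PosDef ∧ ∀ x : EuclideanSpace ℂ (Fin n), ‖x‖ = 1 →
    |(inner ℂ x (Matrix.toEuclideanCLM (𝕜 := ℂ) A x) : ℂ).im| ≤
      Real.tan α * ((inner ℂ x (Matrix.toEuclideanCLM (𝕜 := ℂ) A x) : ℂ)).re

/-!
Write `A = H + iK` with `H = Re A` positive definite and `K = Im A`. The sector condition says
`-tan α • H ≤ K ≤ tan α • H` in the Loewner order, so `S = H^(-1/2) K H^(-1/2)` satisfies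
`‖S‖ ≤ tan α`, and `A = H^(1/2) (1 + iS) H^(1/2)`. By the C⋆-identity
`‖1 + iS‖² = ‖1 + S²‖ ≤ 1 + tan² α = sec² α`, while `‖H^(1/2)‖² = ‖H‖ ≤ w(A)`.
Hence `‖A‖ ≤ sec α · w(A)`, and `w(AB) ≤ ‖AB‖ ≤ ‖A‖ ‖B‖` finishes the proof.
-/

open scoped ComplexStarModule

namespace CStarAlgebra

variable {A : Type*} [CStarAlgebra A] [PartialOrder A] [StarOrderedRing A]

lemma norm_le_of_neg_le_of_le {s : A} (hs : IsSelfAdjoint s) {c : ℝ} (hc : 0 ≤ c)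
    (hlo : -algebraMap ℝ A c ≤ s) (hhi : s ≤ algebraMap ℝ A c) : ‖s‖ ≤ c := by
  rcases subsingleton_or_nontrivial A with _ | _
  · simp [Subsingleton.elim s 0, hc]
  rw [← map_neg, algebraMap_le_iff_le_spectrum] at hlo
  rw [le_algebraMap_iff_spectrum_le] at hhi
  rcases norm_or_neg_norm_mem_spectrum hs with h | h
  · exact hhi _ h
  · linarith [hlo _ h]

lemma norm_one_add_I_smul_sq_le {s : A} (hs : IsSelfAdjoint s) :
    ‖1 + Complex.I • s‖ ^ 2 ≤ 1 + ‖s‖ ^ 2 := by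
  have hstar : star (1 + Complex.I • s) * (1 + Complex.I • s) = 1 + star s * s := by
    rw [star_add, star_one, star_smul, Complex.star_def, Complex.conj_I, hs.star_eq]
    simp only [add_mul, mul_add, one_mul, mul_one, smul_mul_smul_comm, neg_mul, Complex.I_mul_I,
      neg_neg, one_smul, neg_smul]
    abel
  have hle : 1 + star s * s ≤ algebraMap ℝ A (1 + ‖s‖ ^ 2) := by
    rw [map_add, map_one]
    gcongr
    exact star_mul_le_algebraMap_norm_sq
  rw [sq, ← CStarRing.norm_star_mul_self, hstar]
  exact (norm_le_iff_le_algebraMap _ (by positivity)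
    (add_nonneg zero_le_one (star_mul_self_nonneg s))).2 hle

lemma norm_le_sqrt_one_add_sq_mul_norm_realPart {a : A} {t : ℝ} (ht : 0 ≤ t)
    (hre : IsStrictlyPositive (ℜ a : A)) (hlo : -(t • (ℜ a : A)) ≤ ℑ a)
    (hhi : (ℑ a : A) ≤ t • (ℜ a : A)) :
    ‖a‖ ≤ √(1 + t ^ 2) * ‖(ℜ a : A)‖ := by
  set h : A := (ℜ a : A)
  set k : A := (ℑ a : A)
  set r : A := h ^ (1 / 2 : ℝ)
  set b : A := h ^ (-(1 / 2) : ℝ)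
  have hrb : r * b = 1 := CFC.rpow_mul_rpow_neg _ hre
  have hbr : b * r = 1 := CFC.rpow_neg_mul_rpow _ hre
  have hrr : r * r = h := by
    rw [← CFC.rpow_add hre.isUnit]
    norm_num [CFC.rpow_one h hre.nonneg]
  have hr : IsSelfAdjoint r := IsSelfAdjoint.of_nonneg CFC.rpow_nonneg
  have hb : IsSelfAdjoint b := IsSelfAdjoint.of_nonneg CFC.rpow_nonneg
  have hconj {x y : A} (hxy : x ≤ y) : b * x * b ≤ b * y * b := by
    simpa only [hb.star_eq] using star_left_conjugate_le_conjugate hxy b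
  have hbhb : b * (t • h) * b = algebraMap ℝ A t := by
    rw [← hrr, mul_smul_comm, smul_mul_assoc, Algebra.algebraMap_eq_smul_one]
    congr 1
    rw [mul_assoc, mul_assoc, hrb, mul_one, hbr]
  set s : A := b * k * b
  have hs : IsSelfAdjoint s := by simpa only [hb.star_eq] using (ℑ a).2.conjugate' b
  have hs_norm : ‖s‖ ≤ t := by
    refine norm_le_of_neg_le_of_le hs ht ?_ ?_
    · simpa only [hbhb, mul_neg, neg_mul] using hconj hlo
    · simpa only [hbhb] using hconj hhi
  have hfac : a = r * (1 + Complex.I • s) * r := by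
    have hk : r * s * r = k := by
      simp only [s, ← mul_assoc, hrb, one_mul]
      rw [mul_assoc, hbr, mul_one]
    rw [mul_add, add_mul, mul_one, hrr, mul_smul_comm, smul_mul_assoc, hk]
    exact (realPart_add_I_smul_imaginaryPart a).symm
  have hnorm_r : ‖r‖ * ‖r‖ = ‖h‖ := by
    rw [← CStarRing.norm_star_mul_self, hr.star_eq, hrr]
  have hmid : ‖1 + Complex.I • s‖ ≤ √(1 + t ^ 2) := by
    refine Real.le_sqrt_of_sq_le ((norm_one_add_I_smul_sq_le hs).trans ?_)
    gcongr
  calc ‖a‖ ≤ ‖r‖ * ‖1 + Complex.I • s‖ * ‖r‖ := by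
        rw [hfac]; exact (norm_mul_le _ _).trans (by gcongr; exact norm_mul_le _ _)
    _ = ‖1 + Complex.I • s‖ * ‖h‖ := by rw [← hnorm_r]; ring
    _ ≤ √(1 + t ^ 2) * ‖h‖ := by gcongr

end CStarAlgebra

namespace ContinuousLinearMap

variable {E : Type*} [NormedAddCommGroup E] [InnerProductSpace ℂ E]

lemma re_inner_smul_apply (X : E →L[ℂ] E) (t : ℝ) (x : E) :
    (inner ℂ x ((t • X) x)).re = t * (inner ℂ x (X x)).re := by
  rw [_root_.smul_apply, inner_smul_right_eq_smul, Complex.smul_re, smul_eq_mul]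

variable [CompleteSpace E]

lemma re_inner_realPart_apply (T : E →L[ℂ] E) (x : E) :
    (inner ℂ x ((ℜ T : E →L[ℂ] E) x)).re = (inner ℂ x (T x)).re := by
  rw [realPart_apply_coe, _root_.smul_apply, _root_.add_apply, inner_smul_right_eq_smul,
    inner_add_right, star_eq_adjoint, adjoint_inner_right, ← inner_conj_symm (T x) x]
  simp only [Complex.smul_re, Complex.add_re, Complex.conj_re, smul_eq_mul]
  ring

lemma re_inner_imaginaryPart_apply (T : E →L[ℂ] E) (x : E) :
    (inner ℂ x ((ℑ T : E →L[ℂ] E) x)).re = (inner ℂ x (T x)).im := by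
  rw [imaginaryPart_apply_coe, _root_.smul_apply, _root_.smul_apply, _root_.sub_apply,
    inner_smul_right, inner_smul_right_eq_smul, inner_sub_right, star_eq_adjoint,
    adjoint_inner_right, ← inner_conj_symm (T x) x, Complex.sub_conj]
  simp [Complex.mul_re]

lemma le_of_re_inner_le {X Y : E →L[ℂ] E} (hX : IsSelfAdjoint X) (hY : IsSelfAdjoint Y)
    (h : ∀ x, (inner ℂ x (X x)).re ≤ (inner ℂ x (Y x)).re) : X ≤ Y := by
  rw [le_def, isPositive_def']
  refine ⟨hY.sub hX, fun x => ?_⟩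
  rw [reApplyInnerSelf_apply, inner_re_symm, _root_.sub_apply, inner_sub_right, map_sub,
    sub_nonneg]
  exact h x

lemma norm_realPart_le {T : E →L[ℂ] E} {w : ℝ} (hw : 0 ≤ w)
    (hnum : ∀ x, ‖inner ℂ x (T x)‖ ≤ w * ‖x‖ ^ 2) : ‖(ℜ T : E →L[ℂ] E)‖ ≤ w := by
  have hw_inner (x : E) : (inner ℂ x (algebraMap ℝ (E →L[ℂ] E) w x)).re = w * ‖x‖ ^ 2 := by
    rw [Algebra.algebraMap_eq_smul_one, re_inner_smul_apply, one_apply_eq_self,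
      ← RCLike.re_to_complex, inner_self_eq_norm_sq]
  have hbound (x : E) : |(inner ℂ x ((ℜ T : E →L[ℂ] E) x)).re| ≤ w * ‖x‖ ^ 2 := by
    rw [re_inner_realPart_apply]
    exact (Complex.abs_re_le_norm _).trans (hnum x)
  refine CStarAlgebra.norm_le_of_neg_le_of_le (ℜ T).2 hw ?_ ?_
  · refine le_of_re_inner_le (IsSelfAdjoint.algebraMap _ (.all w)).neg (ℜ T).2 fun x => ?_
    rw [_root_.neg_apply, inner_neg_right, Complex.neg_re, hw_inner]
    exact neg_le_of_abs_le (hbound x)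
  · refine le_of_re_inner_le (ℜ T).2 (IsSelfAdjoint.algebraMap _ (.all w)) fun x => ?_
    rw [hw_inner]
    exact le_of_abs_le (hbound x)

lemma imaginaryPart_mem_Icc_of_abs_im_inner_le {T : E →L[ℂ] E} {t : ℝ}
    (hsec : ∀ x, |(inner ℂ x (T x)).im| ≤ t * (inner ℂ x (T x)).re) :
    -(t • (ℜ T : E →L[ℂ] E)) ≤ ℑ T ∧ (ℑ T : E →L[ℂ] E) ≤ t • (ℜ T : E →L[ℂ] E) := by
  have htre : IsSelfAdjoint (t • (ℜ T : E →L[ℂ] E)) := IsSelfAdjoint.smul (.all t) (ℜ T).2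
  constructor
  · refine le_of_re_inner_le htre.neg (ℑ T).2 fun x => ?_
    rw [_root_.neg_apply, inner_neg_right, Complex.neg_re, re_inner_smul_apply,
      re_inner_realPart_apply, re_inner_imaginaryPart_apply]
    exact neg_le_of_abs_le (hsec x)
  · refine le_of_re_inner_le (ℑ T).2 htre fun x => ?_
    rw [re_inner_smul_apply, re_inner_realPart_apply, re_inner_imaginaryPart_apply]
    exact le_of_abs_le (hsec x)

theorem norm_le_of_abs_im_inner_le (T : E →L[ℂ] E) {t w : ℝ} (ht : 0 ≤ t) (hw : 0 ≤ w)
    (hre : IsStrictlyPositive (ℜ T : E →L[ℂ] E))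
    (hnum : ∀ x, ‖inner ℂ x (T x)‖ ≤ w * ‖x‖ ^ 2)
    (hsec : ∀ x, |(inner ℂ x (T x)).im| ≤ t * (inner ℂ x (T x)).re) :
    ‖T‖ ≤ √(1 + t ^ 2) * w := by
  obtain ⟨hlo, hhi⟩ := imaginaryPart_mem_Icc_of_abs_im_inner_le hsec
  calc ‖T‖ ≤ √(1 + t ^ 2) * ‖(ℜ T : E →L[ℂ] E)‖ :=
        CStarAlgebra.norm_le_sqrt_one_add_sq_mul_norm_realPart ht hre hlo hhi
    _ ≤ √(1 + t ^ 2) * w := by gcongr; exact norm_realPart_le hw hnum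

end ContinuousLinearMap

lemma ContinuousLinearMap.exists_norm_eq_one_inner_map_self_eq {𝕜 E : Type*} [RCLike 𝕜]
    [NormedAddCommGroup E] [InnerProductSpace 𝕜 E] (T : E →L[𝕜] E) {x : E} (hx : x ≠ 0) :
    ∃ u : E, ‖u‖ = 1 ∧ inner 𝕜 x (T x) = ‖x‖ ^ 2 • inner 𝕜 u (T u) := by
  refine ⟨(‖x‖⁻¹ : 𝕜) • x, norm_smul_inv_norm hx, ?_⟩
  have hx' : (‖x‖ : 𝕜) ≠ 0 := by exact_mod_cast norm_ne_zero_iff.mpr hx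
  rw [map_smul, inner_smul_left, inner_smul_right, ← mul_assoc, map_inv₀,
    RCLike.conj_ofReal, RCLike.real_smul_eq_coe_mul]
  push_cast
  field_simp

section MatrixSector

variable {n : ℕ}

lemma norm_inner_toEuclideanCLM_le_opNorm (A : Matrix (Fin n) (Fin n) ℂ)
    {x : EuclideanSpace ℂ (Fin n)} (hx : ‖x‖ = 1) :
    ‖inner ℂ x (toEuclideanCLM (𝕜 := ℂ) A x)‖ ≤ opNorm A := by
  calc ‖inner ℂ x (toEuclideanCLM (𝕜 := ℂ) A x)‖ ≤ ‖x‖ * ‖toEuclideanCLM (𝕜 := ℂ) A x‖ :=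
        norm_inner_le_norm _ _
    _ ≤ ‖x‖ * (opNorm A * ‖x‖) := by gcongr; exact (toEuclideanCLM (𝕜 := ℂ) A).le_opNorm x
    _ = opNorm A := by rw [hx]; ring

lemma le_nradius (A : Matrix (Fin n) (Fin n) ℂ) {x : EuclideanSpace ℂ (Fin n)} (hx : ‖x‖ = 1) :
    ‖inner ℂ x (toEuclideanCLM (𝕜 := ℂ) A x)‖ ≤ nradius A :=
  le_csSup ⟨opNorm A, by rintro r ⟨y, hy, rfl⟩; exact norm_inner_toEuclideanCLM_le_opNorm A hy⟩
    ⟨x, hx, rfl⟩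

lemma nradius_nonneg (A : Matrix (Fin n) (Fin n) ℂ) : 0 ≤ nradius A :=
  Real.sSup_nonneg fun _ ⟨_, _, hr⟩ => hr ▸ norm_nonneg _

lemma nradius_le_opNorm (A : Matrix (Fin n) (Fin n) ℂ) : nradius A ≤ opNorm A :=
  Real.sSup_le (fun _ ⟨_, hx, hr⟩ => hr ▸ norm_inner_toEuclideanCLM_le_opNorm A hx)
    (norm_nonneg _)

lemma opNorm_mul_le (A B : Matrix (Fin n) (Fin n) ℂ) : opNorm (A * B) ≤ opNorm A * opNorm B := by
  rw [opNorm, map_mul]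
  exact norm_mul_le _ _

lemma norm_inner_le_nradius_mul_sq (A : Matrix (Fin n) (Fin n) ℂ)
    (x : EuclideanSpace ℂ (Fin n)) :
    ‖inner ℂ x (toEuclideanCLM (𝕜 := ℂ) A x)‖ ≤ nradius A * ‖x‖ ^ 2 := by
  rcases eq_or_ne x 0 with rfl | hx
  · simp
  obtain ⟨u, hu, heq⟩ := (toEuclideanCLM (𝕜 := ℂ) A).exists_norm_eq_one_inner_map_self_eq hx
  rw [heq, norm_smul, Real.norm_of_nonneg (by positivity), mul_comm]
  gcongr
  exact le_nradius A hu

lemma InSector.abs_im_inner_le {α : ℝ} {A : Matrix (Fin n) (Fin n) ℂ} (hA : InSector α A)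
    (x : EuclideanSpace ℂ (Fin n)) :
    |(inner ℂ x (toEuclideanCLM (𝕜 := ℂ) A x)).im| ≤
      Real.tan α * (inner ℂ x (toEuclideanCLM (𝕜 := ℂ) A x)).re := by
  rcases eq_or_ne x 0 with rfl | hx
  · simp
  obtain ⟨u, hu, heq⟩ := (toEuclideanCLM (𝕜 := ℂ) A).exists_norm_eq_one_inner_map_self_eq hx
  rw [heq, Complex.smul_re, Complex.smul_im, smul_eq_mul, smul_eq_mul, abs_mul,
    abs_of_nonneg (by positivity), mul_left_comm]
  gcongr
  exact hA.2 u hu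

open scoped MatrixOrder in
lemma isStrictlyPositive_realPart_toEuclideanCLM {A : Matrix (Fin n) (Fin n) ℂ}
    (hA : (matRe A).PosDef) : IsStrictlyPositive (ℜ (toEuclideanCLM (𝕜 := ℂ) A) :
      EuclideanSpace ℂ (Fin n) →L[ℂ] EuclideanSpace ℂ (Fin n)) := by
  have hre : (ℜ (toEuclideanCLM (𝕜 := ℂ) A) :
      EuclideanSpace ℂ (Fin n) →L[ℂ] EuclideanSpace ℂ (Fin n)) =
        toEuclideanCLM (𝕜 := ℂ) (matRe A) := by
    rw [realPart_apply_coe, matRe, map_smul, map_add, ← star_eq_conjTranspose, map_star]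
    norm_num [← Complex.coe_smul]
  rw [hre]
  obtain ⟨hnonneg, hunit⟩ := IsStrictlyPositive.iff_of_unital.mp hA.isStrictlyPositive
  refine IsStrictlyPositive.iff_of_unital.mpr ⟨?_, hunit.map _⟩
  simpa using OrderHomClass.mono (toEuclideanCLM (𝕜 := ℂ) (n := Fin n)) hnonneg

lemma InSector.opNorm_le {α : ℝ} (hα0 : 0 ≤ α) (hα : α < Real.pi / 2)
    {A : Matrix (Fin n) (Fin n) ℂ} (hA : InSector α A) :
    opNorm A ≤ (Real.cos α)⁻¹ * nradius A := by
  have hcos : 0 < Real.cos α := Real.cos_pos_of_mem_Ioo ⟨by linarith [Real.pi_pos], hα⟩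
  rw [← Real.inv_sqrt_one_add_tan_sq hcos, inv_inv]
  exact ContinuousLinearMap.norm_le_of_abs_im_inner_le _
    (Real.tan_nonneg_of_nonneg_of_le_pi_div_two hα0 hα.le) (nradius_nonneg A)
    (isStrictlyPositive_realPart_toEuclideanCLM hA.1) (norm_inner_le_nradius_mul_sq A)
    hA.abs_im_inner_le

end MatrixSector

theorem stmt5_general {n : ℕ} {α : ℝ} (hα0 : 0 ≤ α) (hα : α < Real.pi / 2)
    {A B : Matrix (Fin n) (Fin n) ℂ} (hA : InSector α A) (hB : InSector α B) :
    nradius (A * B) ≤ ((Real.cos α)⁻¹) ^ 2 * (nradius A * nradius B) := by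
  have hA' := hA.opNorm_le hα0 hα
  have hB' := hB.opNorm_le hα0 hα
  calc nradius (A * B) ≤ opNorm A * opNorm B := (nradius_le_opNorm _).trans (opNorm_mul_le A B)
    _ ≤ ((Real.cos α)⁻¹ * nradius A) * ((Real.cos α)⁻¹ * nradius B) :=
        mul_le_mul hA' hB' (norm_nonneg _) ((norm_nonneg _).trans hA')
    _ = ((Real.cos α)⁻¹) ^ 2 * (nradius A * nradius B) := by ring

theorem stmt5 {n : ℕ} (hn : 1 ≤ n) {α : ℝ} (hα0 : 0 ≤ α) (hα : α < Real.pi / 2)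
    {A B : Matrix (Fin n) (Fin n) ℂ} (hA : InSector α A) (hB : InSector α B) :
    nradius (A * B) ≤ ((Real.cos α)⁻¹) ^ 2 * (nradius A * nradius B) :=
  stmt5_general hα0 hα hA hB
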